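/- Let 0 < c_s < c_l, 0 < V < c_s, and set α̂ = √(1 − V²/c_l²), β̂ = √(1 − V²/c_s²), v_l = V/c_l, v_s = V/c_s, R₀ = 4α̂β̂ − (1 + β̂²)², γ₂ = R₀/(2α̂v_s²). Let α̃, β̃ : ℝ → ℂ be functions such that for every real p, Re α̃(p) > 0, α̃(p)² = α̂²p² + 2iv_l p + 1, Re β̃(p) > 0, and β̃(p)² = β̂²p² + 2i(Vc_l/c_s²)p + c_l²/c_s². Define g̃₂(p) = R̃₁(p)/(2α̃(p)(p² − β̃(p)²)p) with R̃₁(p) = (p² + β̃(p)²)² − 4α̃(p)β̃(p)p². Then g̃₂(p) → −γ₂ as p → +∞ and g̃₂(p) → +γ₂ as p → −∞. -/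

import Mathlib

/-!
Dividing numerator and denominator by `p⁴` writes `g̃₂(p)` as `G(α̃(p)/p, β̃(p)/p)`, where
`G(A, B) = ((1 + B²)² - 4AB) / (2A(1 - B²))` is `rayleighQuotient`. Since `(α̃(p)/p)² → α̂²`
and `Re α̃ > 0`, the branch condition pins `α̃(p)/p → ±α̂` as `p → ±∞`, and likewise
`β̃(p)/p → ±β̂`. Now `G` is odd, and `G(α̂, β̂) = -γ₂` because `1 - β̂² = v_s²`.
-/

open Complex Filter Topology

theorem tendsto_of_tendsto_sq_of_re_pos {ι : Type*} {l : Filter ι} {f : ι → ℂ} {w : ℂ}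
    (hw : 0 < w.re) (hre : ∀ᶠ i in l, 0 < (f i).re)
    (hsq : Tendsto (fun i => f i ^ 2) l (𝓝 (w ^ 2))) :
    Tendsto f l (𝓝 w) := by
  rw [tendsto_iff_norm_sub_tendsto_zero] at hsq ⊢
  have hbound : ∀ᶠ i in l, ‖f i - w‖ ≤ ‖f i ^ 2 - w ^ 2‖ / w.re := by
    filter_upwards [hre] with i hi
    have hsum : w.re ≤ ‖f i + w‖ := by
      calc w.re ≤ (f i + w).re := by rw [add_re]; linarith
        _ ≤ ‖f i + w‖ := re_le_norm _
    rw [le_div_iff₀ hw, show f i ^ 2 - w ^ 2 = (f i - w) * (f i + w) by ring, norm_mul]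
    exact mul_le_mul_of_nonneg_left hsum (norm_nonneg _)
  exact squeeze_zero' (.of_forall fun _ => norm_nonneg _) hbound
    (by simpa using hsq.div_const w.re)

section QuadraticRadicand

variable {f : ℝ → ℂ} {c : ℝ} {d e : ℂ}

theorem tendsto_div_atTop_of_sq_eq_quadratic (hc : 0 < c) (hre : ∀ p, 0 < (f p).re)
    (hsq : ∀ p : ℝ, f p ^ 2 = (c : ℂ) ^ 2 * (p : ℂ) ^ 2 + d * p + e) :
    Tendsto (fun p : ℝ => f p / p) atTop (𝓝 c) := by
  have hinv : Tendsto (fun p : ℝ => (p : ℂ)⁻¹) atTop (𝓝 0) := by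
    simpa [Function.comp_def] using (continuous_ofReal.tendsto 0).comp tendsto_inv_atTop_zero
  have hpoly :
      Tendsto (fun z : ℂ => (c : ℂ) ^ 2 + d * z + e * z ^ 2) (𝓝 0) (𝓝 ((c : ℂ) ^ 2)) := by
    simpa using (by fun_prop : Continuous fun z : ℂ => (c : ℂ) ^ 2 + d * z + e * z ^ 2).tendsto 0
  have hexpand : ∀ᶠ p : ℝ in atTop,
      (c : ℂ) ^ 2 + d * (p : ℂ)⁻¹ + e * ((p : ℂ)⁻¹) ^ 2 = (f p / p) ^ 2 := by
    filter_upwards [eventually_ne_atTop 0] with p hp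
    have hp' : (p : ℂ) ≠ 0 := ofReal_ne_zero.mpr hp
    rw [div_pow, hsq]
    field_simp
  refine tendsto_of_tendsto_sq_of_re_pos (by simpa using hc) ?_ ((hpoly.comp hinv).congr' hexpand)
  filter_upwards [eventually_gt_atTop 0] with p hp
  rw [div_ofReal_re]
  exact div_pos (hre p) hp

theorem tendsto_div_atBot_of_sq_eq_quadratic (hc : 0 < c) (hre : ∀ p, 0 < (f p).re)
    (hsq : ∀ p : ℝ, f p ^ 2 = (c : ℂ) ^ 2 * (p : ℂ) ^ 2 + d * p + e) :
    Tendsto (fun p : ℝ => f p / p) atBot (𝓝 (-c)) := by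
  have hreflect : Tendsto (fun p : ℝ => f (-p) / p) atTop (𝓝 c) :=
    tendsto_div_atTop_of_sq_eq_quadratic (d := -d) (e := e) hc (fun p => hre (-p))
      fun p => by rw [hsq]; push_cast; ring
  rw [← tendsto_comp_neg_atTop_iff]
  simpa [div_neg] using hreflect.neg

end QuadraticRadicand

noncomputable def rayleighQuotient (A B : ℂ) : ℂ :=
  ((1 + B ^ 2) ^ 2 - 4 * A * B) / (2 * A * (1 - B ^ 2))

theorem rayleighQuotient_neg_neg (A B : ℂ) :
    rayleighQuotient (-A) (-B) = -rayleighQuotient A B := by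
  unfold rayleighQuotient
  rw [← div_neg]
  congr 1 <;> ring

theorem div_eq_rayleighQuotient (α β p : ℂ) (hp : p ≠ 0) :
    ((p ^ 2 + β ^ 2) ^ 2 - 4 * α * β * p ^ 2) / (2 * α * (p ^ 2 - β ^ 2) * p) =
      rayleighQuotient (α / p) (β / p) := by
  unfold rayleighQuotient
  rw [← mul_div_mul_right _ _ (inv_ne_zero (pow_ne_zero 4 hp))]
  congr 1 <;> field_simp

theorem tendsto_rayleighQuotient {l : Filter ℝ} {α β : ℝ → ℂ} {a b : ℂ}
    (h0 : ∀ᶠ p in l, p ≠ 0) (hα : Tendsto (fun p : ℝ => α p / p) l (𝓝 a))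
    (hβ : Tendsto (fun p : ℝ => β p / p) l (𝓝 b)) (hden : 2 * a * (1 - b ^ 2) ≠ 0) :
    Tendsto (fun p : ℝ => (((p : ℂ) ^ 2 + β p ^ 2) ^ 2 - 4 * α p * β p * (p : ℂ) ^ 2) /
      (2 * α p * ((p : ℂ) ^ 2 - β p ^ 2) * (p : ℂ))) l (𝓝 (rayleighQuotient a b)) := by
  have hG : Tendsto (fun p : ℝ => rayleighQuotient (α p / p) (β p / p)) l
      (𝓝 (rayleighQuotient a b)) :=
    (((tendsto_const_nhds.add (hβ.pow 2)).pow 2).sub ((tendsto_const_nhds.mul hα).mul hβ)).div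
      ((tendsto_const_nhds.mul hα).mul (tendsto_const_nhds.sub (hβ.pow 2))) hden
  refine hG.congr' ?_
  filter_upwards [h0] with p hp
  exact (div_eq_rayleighQuotient _ _ _ (ofReal_ne_zero.mpr hp)).symm

theorem one_sub_sq_div_sq_pos {v c : ℝ} (hv : 0 ≤ v) (hvc : v < c) : 0 < 1 - v ^ 2 / c ^ 2 :=
  sub_pos.mpr <| (div_lt_one (pow_pos (hv.trans_lt hvc) 2)).mpr
    (pow_lt_pow_left₀ hvc hv two_ne_zero)

/-- Asymptotics (29) of the scaled scalar coefficient (28.2):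
`g̃₂(p) → −γ₂` as `p → +∞` and `g̃₂(p) → +γ₂` as `p → −∞`, where
`γ₂ = R₀/(2α̂v_s²)`, `R₀ = 4α̂β̂ − (1 + β̂²)²`. -/
theorem stmt_10 (cl cs V : ℝ) (hcs : 0 < cs) (hcl : cs < cl) (hV0 : 0 < V) (hVs : V < cs)
    (αt βt : ℝ → ℂ)
    (hαt : ∀ p : ℝ, 0 < (αt p).re ∧
      (αt p) ^ 2 = ((Real.sqrt (1 - V ^ 2 / cl ^ 2) : ℝ) : ℂ) ^ 2 * (p : ℂ) ^ 2
        + 2 * I * ((V / cl : ℝ) : ℂ) * (p : ℂ) + 1)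
    (hβt : ∀ p : ℝ, 0 < (βt p).re ∧
      (βt p) ^ 2 = ((Real.sqrt (1 - V ^ 2 / cs ^ 2) : ℝ) : ℂ) ^ 2 * (p : ℂ) ^ 2
        + 2 * I * ((V * cl / cs ^ 2 : ℝ) : ℂ) * (p : ℂ) + ((cl ^ 2 / cs ^ 2 : ℝ) : ℂ)) :
    Tendsto (fun p : ℝ =>
        (((p : ℂ) ^ 2 + (βt p) ^ 2) ^ 2 - 4 * αt p * βt p * (p : ℂ) ^ 2) /
          (2 * αt p * ((p : ℂ) ^ 2 - (βt p) ^ 2) * (p : ℂ)))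
      atTop
      (nhds (-(((4 * Real.sqrt (1 - V ^ 2 / cl ^ 2) * Real.sqrt (1 - V ^ 2 / cs ^ 2)
          - (1 + Real.sqrt (1 - V ^ 2 / cs ^ 2) ^ 2) ^ 2) /
            (2 * Real.sqrt (1 - V ^ 2 / cl ^ 2) * (V / cs) ^ 2) : ℝ) : ℂ))) ∧
    Tendsto (fun p : ℝ =>
        (((p : ℂ) ^ 2 + (βt p) ^ 2) ^ 2 - 4 * αt p * βt p * (p : ℂ) ^ 2) /
          (2 * αt p * ((p : ℂ) ^ 2 - (βt p) ^ 2) * (p : ℂ)))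
      atBot
      (nhds (((4 * Real.sqrt (1 - V ^ 2 / cl ^ 2) * Real.sqrt (1 - V ^ 2 / cs ^ 2)
          - (1 + Real.sqrt (1 - V ^ 2 / cs ^ 2) ^ 2) ^ 2) /
            (2 * Real.sqrt (1 - V ^ 2 / cl ^ 2) * (V / cs) ^ 2) : ℝ) : ℂ)) := by
  have hl := one_sub_sq_div_sq_pos hV0.le (hVs.trans hcl)
  have hs := one_sub_sq_div_sq_pos hV0.le hVs
  set a := Real.sqrt (1 - V ^ 2 / cl ^ 2)
  set b := Real.sqrt (1 - V ^ 2 / cs ^ 2)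
  set γ₂ := (4 * a * b - (1 + b ^ 2) ^ 2) / (2 * a * (V / cs) ^ 2) with hγ₂
  have ha : 0 < a := Real.sqrt_pos.mpr hl
  have hb : 0 < b := Real.sqrt_pos.mpr hs
  have hgap : 1 - b ^ 2 = (V / cs) ^ 2 := by
    rw [Real.sq_sqrt hs.le]; field_simp; ring
  have hden : 2 * (a : ℂ) * (1 - (b : ℂ) ^ 2) ≠ 0 := by
    exact_mod_cast (by rw [hgap]; positivity : 2 * a * (1 - b ^ 2) ≠ 0)
  have hvalue : rayleighQuotient a b = -(γ₂ : ℂ) := by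
    rw [hγ₂, ← hgap, rayleighQuotient]; push_cast; ring
  constructor
  · rw [← hvalue]
    exact tendsto_rayleighQuotient (eventually_ne_atTop 0)
      (tendsto_div_atTop_of_sq_eq_quadratic ha (fun p => (hαt p).1) fun p => (hαt p).2)
      (tendsto_div_atTop_of_sq_eq_quadratic hb (fun p => (hβt p).1) fun p => (hβt p).2) hden
  · rw [← neg_neg (γ₂ : ℂ), ← hvalue, ← rayleighQuotient_neg_neg]
    exact tendsto_rayleighQuotient (eventually_ne_atBot 0)
      (tendsto_div_atBot_of_sq_eq_quadratic ha (fun p => (hαt p).1) fun p => (hαt p).2)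
      (tendsto_div_atBot_of_sq_eq_quadratic hb (fun p => (hβt p).1) fun p => (hβt p).2)
      (by simpa using hden)
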